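/- Let W ⊆ ℝ², v ∈ S¹, δ ∈ (0,1), and let γ : I → ℝ² be a C¹ curve satisfying γ'(t) ∈ Ĉ(v,δ) for all t ∈ I. Then the Lebesgue measure of γ⁻¹(W) is at most diam_v(W)/(1−δ). -/

import Mathlib

/-!
Along the curve, `f t = ⟪γ t, v⟫` has derivative `⟪γ' t, v⟫`, which is continuous and of absolute
value at least `1 - δ > 0`, hence of constant sign. By the mean value theorem `f` is then
`(1 - δ)`-expanding: `(1 - δ) |t - s| ≤ |f t - f s|`, and for `γ s, γ t ∈ W` the right side is at
most `diam_v(W)`. So `γ⁻¹(W)` has diameter, and hence measure, at most `diam_v(W) / (1 - δ)`.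
-/

open MeasureTheory Filter Metric Set Topology RealInnerProductSpace ENNReal NNReal

noncomputable section

/-- The Euclidean plane. -/
abbrev E2 := EuclideanSpace ℝ (Fin 2)

/-- `IsC1Curve a b γ γ'` : `γ` restricted to the compact nondegenerate interval `[a,b]`
is a C¹ curve with (one-sided at endpoints) derivative `γ'`, continuous and of unit
norm on `[a,b]`. -/
def IsC1Curve (a b : ℝ) (γ γ' : ℝ → E2) : Prop :=
  a < b ∧ ContinuousOn γ' (Set.Icc a b) ∧
    (∀ t ∈ Set.Icc a b, HasDerivWithinAt γ (γ' t) (Set.Icc a b) t) ∧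
    (∀ t ∈ Set.Icc a b, ‖γ' t‖ = 1)

/-- The double-sided cone `Ĉ(w,α) = {v ∈ S¹ : |⟨v,w⟩| ≥ 1 − α}`. -/
def hatC (w : E2) (α : ℝ) : Set E2 :=
  {v ∈ sphere (0:E2) 1 | 1 - α ≤ |⟪v, w⟫|}

/-- `diam_v(W) = sup {⟨y − x, v⟩ : x, y ∈ W}` as an extended nonnegative real. -/
def diamv (v : E2) (W : Set E2) : ℝ≥0∞ :=
  ⨆ x ∈ W, ⨆ y ∈ W, ENNReal.ofReal ⟪y - x, v⟫

lemma IsPreconnected.forall_le_or_forall_le_neg_of_le_abs {s : Set ℝ}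
    (hs : IsPreconnected s) {f : ℝ → ℝ} (hf : ContinuousOn f s) {c : ℝ} (hc : 0 < c)
    (hfc : ∀ x ∈ s, c ≤ |f x|) :
    (∀ x ∈ s, c ≤ f x) ∨ (∀ x ∈ s, f x ≤ -c) := by
  by_contra! ⟨⟨x, hx, hfx⟩, ⟨y, hy, hfy⟩⟩
  have hfx' : f x ≤ -c := by cases abs_cases (f x) <;> linarith [hfc x hx]
  have hfy' : c ≤ f y := by cases abs_cases (f y) <;> linarith [hfc y hy]
  obtain ⟨z, hz, hfz⟩ := hs.intermediate_value hx hy hf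
    (show (0 : ℝ) ∈ Icc (f x) (f y) from ⟨by linarith, by linarith⟩)
  linarith [hfc z hz, hfz ▸ abs_zero (α := ℝ)]

lemma Convex.mul_sub_le_image_sub_of_le_hasDerivWithinAt {D : Set ℝ} (hD : Convex ℝ D)
    {f f' : ℝ → ℝ} (hf : ∀ x ∈ D, HasDerivWithinAt f (f' x) D x) {c : ℝ}
    (hf'c : ∀ x ∈ D, c ≤ f' x) :
    ∀ x ∈ D, ∀ y ∈ D, x ≤ y → c * (y - x) ≤ f y - f x := by
  have hf_int : ∀ x ∈ interior D, HasDerivAt f (f' x) x := fun x hx =>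
    (hf x (interior_subset hx)).hasDerivAt (mem_interior_iff_mem_nhds.1 hx)
  refine hD.mul_sub_le_image_sub_of_le_deriv (fun x hx => (hf x hx).continuousWithinAt)
    (fun x hx => (hf_int x hx).differentiableAt.differentiableWithinAt) fun x hx => ?_
  rw [(hf_int x hx).deriv]
  exact hf'c x (interior_subset hx)

lemma Convex.mul_abs_sub_le_abs_image_sub {D : Set ℝ} (hD : Convex ℝ D) {f f' : ℝ → ℝ}
    (hf : ∀ x ∈ D, HasDerivWithinAt f (f' x) D x) (hf' : ContinuousOn f' D) {c : ℝ}
    (hc : 0 < c) (hf'c : ∀ x ∈ D, c ≤ |f' x|) :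
    ∀ x ∈ D, ∀ y ∈ D, c * |y - x| ≤ |f y - f x| := by
  have hmono : ∀ x ∈ D, ∀ y ∈ D, x ≤ y → c * (y - x) ≤ |f y - f x| := by
    rcases hD.isPreconnected.forall_le_or_forall_le_neg_of_le_abs hf' hc hf'c with hpos | hneg
    · intro x hx y hy hxy
      exact (hD.mul_sub_le_image_sub_of_le_hasDerivWithinAt hf hpos x hx y hy hxy).trans
        (le_abs_self _)
    · intro x hx y hy hxy
      have := hD.mul_sub_le_image_sub_of_le_hasDerivWithinAt (fun x hx => (hf x hx).neg)
        (fun x hx => le_neg_of_le_neg (hneg x hx)) x hx y hy hxy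
      rw [Pi.neg_apply, Pi.neg_apply, neg_sub_neg] at this
      exact this.trans (abs_sub_comm (f y) (f x) ▸ le_abs_self _)
  intro x hx y hy
  rcases le_total x y with hxy | hyx
  · rw [abs_of_nonneg (sub_nonneg.2 hxy)]
    exact hmono x hx y hy hxy
  · rw [abs_sub_comm, abs_of_nonneg (sub_nonneg.2 hyx), abs_sub_comm]
    exact hmono y hy x hx hyx

lemma Real.volume_le_div_of_mul_abs_sub_le {S : Set ℝ} {c : ℝ} {M : ℝ≥0∞} (hc : 0 < c)
    (hS : ∀ x ∈ S, ∀ y ∈ S, ENNReal.ofReal (c * |y - x|) ≤ M) :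
    volume S ≤ M / ENNReal.ofReal c := by
  refine (Real.volume_le_diam S).trans (Metric.ediam_le fun x hx y hy => ?_)
  rw [ENNReal.le_div_iff_mul_le (Or.inl (ENNReal.ofReal_pos.2 hc).ne') (Or.inl ofReal_ne_top),
    edist_dist, Real.dist_eq, abs_sub_comm, ← ENNReal.ofReal_mul (abs_nonneg _), mul_comm]
  exact hS x hx y hy

lemma le_diamv {v : E2} {W : Set E2} {x y : E2} (hx : x ∈ W) (hy : y ∈ W) :
    ENNReal.ofReal ⟪y - x, v⟫ ≤ diamv v W :=
  le_iSup₂_of_le x hx (le_iSup₂_of_le y hy le_rfl)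

lemma ofReal_abs_inner_sub_le_diamv {v : E2} {W : Set E2} {x y : E2} (hx : x ∈ W) (hy : y ∈ W) :
    ENNReal.ofReal |⟪y - x, v⟫| ≤ diamv v W := by
  rw [abs_eq_max_neg, ENNReal.ofReal_max, ← inner_neg_left, neg_sub]
  exact max_le (le_diamv hx hy) (le_diamv hy hx)

theorem stmt17_general (W : Set E2) (v : E2)
    (δ : ℝ) (hδ : δ ∈ Set.Ioo (0:ℝ) 1)
    (a b : ℝ) (γ γ' : ℝ → E2) (hγ : IsC1Curve a b γ γ')
    (hdir : ∀ t ∈ Set.Icc a b, γ' t ∈ hatC v δ) :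
    volume (γ ⁻¹' W ∩ Set.Icc a b) ≤ diamv v W / ENNReal.ofReal (1 - δ) := by
  obtain ⟨-, hγ'_cont, hγ_deriv, -⟩ := hγ
  have hc : 0 < 1 - δ := sub_pos.2 hδ.2
  have hderiv : ∀ t ∈ Icc a b,
      HasDerivWithinAt (fun t => ⟪γ t, v⟫) ⟪γ' t, v⟫ (Icc a b) t := fun t ht => by
    simpa using (hγ_deriv t ht).inner ℝ (hasDerivWithinAt_const t _ v)
  have hexpand := (convex_Icc a b).mul_abs_sub_le_abs_image_sub hderiv
    (hγ'_cont.inner continuousOn_const) hc fun t ht => (hdir t ht).2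
  refine Real.volume_le_div_of_mul_abs_sub_le hc fun s hs t ht => ?_
  calc ENNReal.ofReal ((1 - δ) * |t - s|) ≤ ENNReal.ofReal |⟪γ t - γ s, v⟫| :=
        ENNReal.ofReal_le_ofReal (by simpa only [inner_sub_left] using hexpand s hs.2 t ht.2)
    _ ≤ diamv v W := ofReal_abs_inner_sub_le_diamv hs.1 ht.1

/-- If `γ` is a C¹ curve with `γ'(t) ∈ Ĉ(v,δ)` for all `t`, then the
Lebesgue measure of `γ⁻¹(W)` is at most `diam_v(W)/(1−δ)`. -/
theorem stmt17 (W : Set E2) (v : E2) (hv : v ∈ sphere (0:E2) 1)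
    (δ : ℝ) (hδ : δ ∈ Set.Ioo (0:ℝ) 1)
    (a b : ℝ) (γ γ' : ℝ → E2) (hγ : IsC1Curve a b γ γ')
    (hdir : ∀ t ∈ Set.Icc a b, γ' t ∈ hatC v δ) :
    volume (γ ⁻¹' W ∩ Set.Icc a b) ≤ diamv v W / ENNReal.ofReal (1 - δ) :=
  stmt17_general W v δ hδ a b γ γ' hγ hdir

end
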